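/- Let g_1,…,g_d be a C^{1+ε} Cantor system on [0,1]. Then there exists K > 0 such that for all j ≠ j' in Σ_d^dual and all n ≥ #(j∩j'), |S_n(j|_n) − S_n(j'|_n)|_∞ ≤ K · |I_{j∩j'}|^ε. -/

import Mathlib

/-!
Write `G_u` for the composition of the branches along a word `u`. Every coordinate of the
scaling data of an extended word `u ++ v` is the ratio `|G_v(J)| / |G_v(I_u)|` for a subinterval
`J ⊆ I_u` (a child of `I_u` or a gap between two children), while the same coordinate of
`S(u)` is `|J| / |I_u|`. By the mean value theorem and the Hölder bound on the derivatives, one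
branch distorts such a ratio inside an interval `I` by a factor at most `exp ((H/δ) |I|^ε)`,
where `δ` bounds the derivatives from below and `H` is their Hölder constant; as the branches
contract by a factor `lam < 1`, these exponents along the orbit of `I_u` are dominated
by a geometric series, so the total distortion is `exp (C |I_u|^ε)`. Hence
`|S(u ++ v) - S(u)| ≤ K |I_u|^ε`, and two sequences with common prefix `u = j|_p` are compared
through `S(u)` by the triangle inequality.
-/

open Set Filter

noncomputable section

/-- The unit interval `[0,1] ⊆ ℝ`. -/
abbrev I01 : Set ℝ := Set.Icc (0:ℝ) 1

/-- `ψ` satisfies an `ε`-Hölder bound with constant `H` on `[0,1]`. -/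
def HolderBoundOn01 (ε H : ℝ) (ψ : ℝ → ℝ) : Prop :=
  ∀ x ∈ I01, ∀ y ∈ I01, |ψ x - ψ y| ≤ H * |x - y| ^ ε

/-- A `C^{k+ε}` Cantor system on `[0,1]` with `d` branches: each branch `g i` is a
`C^k` increasing contraction of `[0,1]` with `ε`-Hölder `k`-th derivative, the images
`g i ([0,1])` are disjoint closed intervals in increasing order, `g 0 0 = 0` and
`g (d-1) 1 = 1`. -/
structure IsCantorSystem {d : ℕ} (k : ℕ) (ε : ℝ) (g : Fin d → ℝ → ℝ) : Prop where
  maps : ∀ i, Set.MapsTo (g i) I01 I01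
  smooth : ∀ i, ContDiffOn ℝ k (g i) I01
  holder : ∀ i, ∃ H > 0, HolderBoundOn01 ε H (iteratedDerivWithin k (g i) I01)
  deriv_pos : ∀ i, ∀ x ∈ I01, 0 < derivWithin (g i) I01 x
  deriv_lt_one : ∀ i, ∀ x ∈ I01, derivWithin (g i) I01 x < 1
  ordered : ∀ i j : Fin d, i < j → g i 1 < g j 0
  first : ∀ i : Fin d, (i : ℕ) = 0 → g i 0 = 0
  last : ∀ i : Fin d, (i : ℕ) = d - 1 → g i 1 = 1

/-- For a finite word `w = [w₁,…,wₙ]`, `wordMap g w = g_{wₙ} ∘ ⋯ ∘ g_{w₁}` (i.e. `G_w`). -/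
def wordMap {d : ℕ} (g : Fin d → ℝ → ℝ) : List (Fin d) → ℝ → ℝ
  | [] => id
  | i :: w => fun x => wordMap g w (g i x)

/-- `|I_w|`, the length of the interval `I_w = G_w([0,1]) = [G_w 0, G_w 1]`. -/
def wordLen {d : ℕ} (g : Fin d → ℝ → ℝ) (w : List (Fin d)) : ℝ :=
  wordMap g w 1 - wordMap g w 0

/-- The scaling data of the word `w`: the first `d` coordinates are the ratios
`|I_{i·w}|/|I_w|`, the last `d-1` coordinates are the `d-1` gap lengths between the
consecutive children `I_{1·w},…,I_{d·w}` divided by `|I_w|`. -/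
def scalingData {d : ℕ} (g : Fin d → ℝ → ℝ) (w : List (Fin d)) : Fin (2*d-1) → ℝ :=
  fun m =>
    if h : (m : ℕ) < d then
      wordLen g ((⟨(m : ℕ), h⟩ : Fin d) :: w) / wordLen g w
    else
      (wordMap g w (g ⟨(m : ℕ) - d + 1, by have := m.isLt; omega⟩ 0)
        - wordMap g w (g ⟨(m : ℕ) - d, by have := m.isLt; omega⟩ 1)) / wordLen g w

/-- The open simplex `Simp_{2d-2} ⊆ (0,1)^{2d-1}` of vectors with coordinate sum `1`. -/
def Simp (d : ℕ) : Set (Fin (2*d-1) → ℝ) :=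
  {s | (∀ m, s m ∈ Set.Ioo (0:ℝ) 1) ∧ ∑ m, s m = 1}

/-- The initial word `j|_n = (j_1,…,j_n)` of a sequence `j ∈ Σ_d^dual = {1,…,d}^ℕ`. -/
def dword {d : ℕ} (j : ℕ → Fin d) (n : ℕ) : List (Fin d) :=
  List.ofFn (fun i : Fin n => j i)

/-- `S` is the scaling function of the system `g`:
`S(j) = lim_{n→∞} S_n(j|_n)` for every `j ∈ Σ_d^dual`. -/
def HasScalingFunction {d : ℕ} (g : Fin d → ℝ → ℝ) (S : (ℕ → Fin d) → Fin (2*d-1) → ℝ) : Prop :=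
  ∀ j : ℕ → Fin d,
    Filter.Tendsto (fun n => scalingData g (dword j n)) Filter.atTop (nhds (S j))

/-- `ρ_S(j,j')` where `n = #(j∩j')`:
`ρ_S(j,j') = sup_w ∏_{t=1}^{n} S((j_{t+1},…,j_n)·w)_{j_t}` (depends only on `j` and `n`). -/
def rhoS {d : ℕ} (S : (ℕ → Fin d) → Fin (2*d-1) → ℝ) (j : ℕ → Fin d) (n : ℕ) : ℝ :=
  ⨆ w : ℕ → Fin d, ∏ t ∈ Finset.range n,
    S (fun m => if t + 1 + m < n then j (t + 1 + m) else w (t + 1 + m - n))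
      ⟨((j t) : ℕ), by have := (j t).isLt; omega⟩

/-- Given a scaling vector `s ∈ Simp_{2d-2}`, the partition of `[0,1]` it determines has
`i`-th child interval starting at `childLeft s i = ∑_{m<i} (s_m + s_{d+m})`. -/
def childLeft {d : ℕ} (s : Fin (2*d-1) → ℝ) (i : Fin d) : ℝ :=
  ∑ m ∈ (Finset.range (i : ℕ)).attach,
    (s ⟨(m : ℕ), by have h := Finset.mem_range.mp m.2; have := i.isLt; omega⟩
      + s ⟨d + (m : ℕ), by have h := Finset.mem_range.mp m.2; have := i.isLt; omega⟩)

/-- The right endpoint of the `i`-th child interval of the partition determined by `s`. -/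
def childRight {d : ℕ} (s : Fin (2*d-1) → ℝ) (i : Fin d) : ℝ :=
  childLeft s i + s ⟨(i : ℕ), by have := i.isLt; omega⟩

/-- `A(j)`: the set of `2d` endpoints of the `d` child intervals of the partition of `[0,1]`
determined by the scaling vector `s = S(j)`. -/
def Apts {d : ℕ} (s : Fin (2*d-1) → ℝ) : Set ℝ :=
  ⋃ i : Fin d, {childLeft s i, childRight s i}

/-- An increasing `C^k` diffeomorphism of `[0,1]`. -/
structure IsDiffeo01 (k : ℕ) (φ : ℝ → ℝ) : Prop where
  smooth : ContDiffOn ℝ k φ I01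
  mono : StrictMonoOn φ I01
  deriv_pos : ∀ x ∈ I01, 0 < derivWithin φ I01 x
  bij : Set.BijOn φ I01 I01

/-- `D^k(A₁,A₂)`: increasing `C^k` diffeomorphisms of `[0,1]` mapping `A₁` onto `A₂`. -/
def Dk (k : ℕ) (A₁ A₂ : Set ℝ) : Set (ℝ → ℝ) :=
  {φ | IsDiffeo01 k φ ∧ φ '' A₁ = A₂}

/-- `D^k_var(M)(A₁,A₂)`: members of `D^k(A₁,A₂)` whose `k`-th derivative has variation `< M`. -/
def DkVar (k : ℕ) (M : ℝ) (A₁ A₂ : Set ℝ) : Set (ℝ → ℝ) :=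
  {φ | φ ∈ Dk k A₁ A₂ ∧ ∀ x ∈ I01, ∀ y ∈ I01,
    |iteratedDerivWithin k φ I01 x - iteratedDerivWithin k φ I01 y| < M}

/-- The renormalization `(L')⁻¹ ∘ φ ∘ L` of `φ`, where `L, L'` are the increasing affine
bijections from `[0,1]` onto `[a,b]` and `[a',b']` respectively. -/
def renorm (a b a' b' : ℝ) (φ : ℝ → ℝ) : ℝ → ℝ :=
  fun x => (φ (a + (b - a) * x) - a') / (b' - a')

/-- `R_{j₀} φ`: restrict `φ` to the `j₀`-th child interval of the partition determined by `s`
(mapped to the `j₀`-th child interval of the partition determined by `s'`) and renormalize. -/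
def Rmap {d : ℕ} (s s' : Fin (2*d-1) → ℝ) (j₀ : Fin d) (φ : ℝ → ℝ) : ℝ → ℝ :=
  renorm (childLeft s j₀) (childRight s j₀) (childLeft s' j₀) (childRight s' j₀) φ

/-- `j₀·j = (j₀, j_1, j_2, …)`. -/
def consSeq {d : ℕ} (j₀ : Fin d) (j : ℕ → Fin d) : ℕ → Fin d :=
  fun m => if m = 0 then j₀ else j (m - 1)

/-- The Cantor set of the system: `C = ⋂_{n ≥ 1} ⋃_{w of length n} I_w`. -/
def systemCantorSet {d : ℕ} (g : Fin d → ℝ → ℝ) : Set ℝ :=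
  ⋂ n : ℕ, ⋃ w ∈ {w : List (Fin d) | w.length = n + 1}, wordMap g w '' I01

end

open Real Topology

def ExpClose (c x y : ℝ) : Prop :=
  x * exp (-c) ≤ y ∧ y ≤ x * exp c

namespace ExpClose

variable {c c' x y z : ℝ}

lemma refl (hc : 0 ≤ c) (hx : 0 ≤ x) : ExpClose c x x :=
  ⟨mul_le_of_le_one_right hx (exp_le_one_iff.2 (neg_nonpos.2 hc)),
    le_mul_of_one_le_right hx (one_le_exp hc)⟩

lemma trans (hxy : ExpClose c x y) (hyz : ExpClose c' y z) : ExpClose (c + c') x z := by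
  constructor
  · calc x * exp (-(c + c')) = x * exp (-c) * exp (-c') := by rw [neg_add, exp_add, mul_assoc]
      _ ≤ y * exp (-c') := mul_le_mul_of_nonneg_right hxy.1 (exp_pos _).le
      _ ≤ z := hyz.1
  · calc z ≤ y * exp c' := hyz.2
      _ ≤ x * exp c * exp c' := mul_le_mul_of_nonneg_right hxy.2 (exp_pos _).le
      _ = x * exp (c + c') := by rw [exp_add, mul_assoc]

lemma mono (h : ExpClose c x y) (hcc' : c ≤ c') (hx : 0 ≤ x) : ExpClose c' x y :=
  ⟨(mul_le_mul_of_nonneg_left (exp_le_exp.2 (neg_le_neg hcc')) hx).trans h.1,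
    h.2.trans (mul_le_mul_of_nonneg_left (exp_le_exp.2 hcc') hx)⟩

lemma mul_left (h : ExpClose c 1 y) (hx : 0 ≤ x) : ExpClose c x (x * y) := by
  rw [ExpClose, one_mul, one_mul] at h
  exact ⟨mul_le_mul_of_nonneg_left h.1 hx, mul_le_mul_of_nonneg_left h.2 hx⟩

lemma abs_sub_le (h : ExpClose c x y) (hc : 0 ≤ c) (hx₀ : 0 ≤ x) (hx₁ : x ≤ 1) :
    |y - x| ≤ c * exp c := by
  have hexp : 1 - c ≤ exp (-c) := by linarith [add_one_le_exp (-c)]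
  have hexp' : exp c - 1 ≤ c * exp c := by
    have := mul_le_mul_of_nonneg_left hexp (exp_pos c).le
    rw [← exp_add, add_neg_cancel, exp_zero] at this
    linarith
  have hc_le : c ≤ c * exp c := le_mul_of_one_le_right hc (one_le_exp hc)
  rw [abs_sub_le_iff]
  constructor <;> nlinarith [h.1, h.2, one_le_exp hc, exp_le_one_iff.2 (neg_nonpos.2 hc)]

end ExpClose

noncomputable def relLen (f : ℝ → ℝ) (α β A B : ℝ) : ℝ :=
  (f β - f α) / (f B - f A)

section Branch

variable {f : ℝ → ℝ} {ε δ lam H : ℝ}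

lemma exists_derivWithin_eq_slope_of_contDiffOn (hf : ContDiffOn ℝ 1 f I01) {x y : ℝ}
    (hx : x ∈ I01) (hy : y ∈ I01) (hxy : x < y) :
    ∃ c ∈ Ioo x y, f y - f x = derivWithin f I01 c * (y - x) := by
  have hderiv : ∀ c ∈ Ioo x y, HasDerivAt f (derivWithin f I01 c) c := by
    intro c hc
    have hc01 : c ∈ Ioo (0 : ℝ) 1 := ⟨hx.1.trans_lt hc.1, hc.2.trans_le hy.2⟩
    exact ((hf.differentiableOn one_ne_zero) c (Ioo_subset_Icc_self hc01)).hasDerivWithinAt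
      |>.hasDerivAt (Icc_mem_nhds hc01.1 hc01.2)
  obtain ⟨c, hc, hslope⟩ := exists_hasDerivAt_eq_slope f _ hxy
    (hf.continuousOn.mono (Icc_subset_Icc hx.1 hy.2)) hderiv
  exact ⟨c, hc, by rw [hslope, div_mul_cancel₀ _ (sub_ne_zero.2 hxy.ne')]⟩

lemma strictMonoOn_of_derivWithin_pos (hf : ContDiffOn ℝ 1 f I01)
    (hpos : ∀ x ∈ I01, 0 < derivWithin f I01 x) : StrictMonoOn f I01 := by
  intro x hx y hy hxy
  obtain ⟨c, hc, hslope⟩ := exists_derivWithin_eq_slope_of_contDiffOn hf hx hy hxy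
  have hc01 : c ∈ I01 := ⟨hx.1.trans hc.1.le, hc.2.le.trans hy.2⟩
  nlinarith [hpos c hc01]

lemma sub_le_mul_sub_of_derivWithin_le (hf : ContDiffOn ℝ 1 f I01)
    (hlam : ∀ x ∈ I01, derivWithin f I01 x ≤ lam) {x y : ℝ} (hx : x ∈ I01) (hy : y ∈ I01)
    (hxy : x ≤ y) : f y - f x ≤ lam * (y - x) := by
  rcases hxy.eq_or_lt with rfl | hlt
  · simp
  obtain ⟨c, hc, hslope⟩ := exists_derivWithin_eq_slope_of_contDiffOn hf hx hy hlt
  rw [hslope]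
  exact mul_le_mul_of_nonneg_right (hlam c ⟨hx.1.trans hc.1.le, hc.2.le.trans hy.2⟩)
    (sub_nonneg.2 hxy)

lemma derivWithin_le_mul_exp (hδ : 0 < δ) (hδf : ∀ x ∈ I01, δ ≤ derivWithin f I01 x)
    (hH : HolderBoundOn01 ε H (derivWithin f I01)) (hH₀ : 0 ≤ H) {u v r : ℝ}
    (hu : u ∈ I01) (hv : v ∈ I01) (huv : |u - v| ^ ε ≤ r) :
    derivWithin f I01 u ≤ derivWithin f I01 v * exp (H / δ * r) := by
  have hr : 0 ≤ H / δ * r :=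
    mul_nonneg (div_nonneg hH₀ hδ.le) ((rpow_nonneg (abs_nonneg _) ε).trans huv)
  have hdiff : derivWithin f I01 u - derivWithin f I01 v ≤ H * r :=
    (le_abs_self _).trans ((hH u hu v hv).trans (mul_le_mul_of_nonneg_left huv hH₀))
  have hv' := hδf v hv
  calc derivWithin f I01 u ≤ derivWithin f I01 v + H / δ * r * δ := by
        rw [mul_comm (H / δ), mul_assoc, div_mul_cancel₀ _ hδ.ne']; linarith
    _ ≤ derivWithin f I01 v + H / δ * r * derivWithin f I01 v := by gcongr
    _ = derivWithin f I01 v * (1 + H / δ * r) := by ring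
    _ ≤ derivWithin f I01 v * exp (H / δ * r) :=
      mul_le_mul_of_nonneg_left (by linarith [add_one_le_exp (H / δ * r)]) (hδ.le.trans hv')

lemma expClose_relLen_of_holder (hε : 0 ≤ ε) (hf : ContDiffOn ℝ 1 f I01) (hδ : 0 < δ)
    (hδf : ∀ x ∈ I01, δ ≤ derivWithin f I01 x) (hH : HolderBoundOn01 ε H (derivWithin f I01))
    (hH₀ : 0 ≤ H) {α β A B : ℝ} (hA : A ∈ I01) (hB : B ∈ I01) (hAα : A ≤ α) (hαβ : α ≤ β)
    (hβB : β ≤ B) (hAB : A < B) :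
    ExpClose (H / δ * (B - A) ^ ε) (relLen id α β A B) (relLen f α β A B) := by
  have hα : α ∈ I01 := ⟨hA.1.trans hAα, hαβ.trans (hβB.trans hB.2)⟩
  have hβ : β ∈ I01 := ⟨hα.1.trans hαβ, hβB.trans hB.2⟩
  have hr₀ : 0 ≤ relLen id α β A B := div_nonneg (sub_nonneg.2 hαβ) (sub_nonneg.2 hAB.le)
  rcases hαβ.eq_or_lt with rfl | hαβ'
  · simpa [relLen] using ExpClose.refl (c := H / δ * (B - A) ^ ε) (x := 0)
      (by positivity) le_rfl
  obtain ⟨η, hη, hηslope⟩ := exists_derivWithin_eq_slope_of_contDiffOn hf hA hB hAB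
  obtain ⟨ξ, hξ, hξslope⟩ := exists_derivWithin_eq_slope_of_contDiffOn hf hα hβ hαβ'
  have hη01 : η ∈ I01 := ⟨hA.1.trans hη.1.le, hη.2.le.trans hB.2⟩
  have hξ01 : ξ ∈ I01 := ⟨hα.1.trans hξ.1.le, hξ.2.le.trans hβ.2⟩
  have hdist : |ξ - η| ^ ε ≤ (B - A) ^ ε :=
    rpow_le_rpow (abs_nonneg _) (abs_sub_le_iff.2 ⟨by linarith [hξ.2, hη.1],
      by linarith [hξ.1, hη.2]⟩) hε
  have hη₀ := hδ.trans_le (hδf η hη01)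
  have hξ₀ := hδ.trans_le (hδf ξ hξ01)
  have hratio : relLen f α β A B
      = relLen id α β A B * (derivWithin f I01 ξ / derivWithin f I01 η) := by
    simp only [relLen, id, hξslope, hηslope]
    field_simp [(sub_pos.2 hAB).ne']
  rw [hratio]
  refine ExpClose.mul_left ⟨?_, ?_⟩ hr₀
  · rw [one_mul, le_div_iff₀ hη₀]
    calc exp (-(H / δ * (B - A) ^ ε)) * derivWithin f I01 η
        ≤ exp (-(H / δ * (B - A) ^ ε)) * (derivWithin f I01 ξ * exp (H / δ * (B - A) ^ ε)) :=
          mul_le_mul_of_nonneg_left (derivWithin_le_mul_exp hδ hδf hH hH₀ hη01 hξ01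
            (by rwa [abs_sub_comm])) (exp_pos _).le
      _ = derivWithin f I01 ξ := by rw [mul_left_comm, ← exp_add, neg_add_cancel, exp_zero, mul_one]
  · rw [one_mul, div_le_iff₀ hη₀, mul_comm]
    exact derivWithin_le_mul_exp hδ hδf hH hH₀ hξ01 hη01 hdist

end Branch

structure BranchBounds {d : ℕ} (ε : ℝ) (g : Fin d → ℝ → ℝ) (δ lam H : ℝ) : Prop where
  maps : ∀ i, MapsTo (g i) I01 I01
  smooth : ∀ i, ContDiffOn ℝ 1 (g i) I01
  deriv_ge : ∀ i, ∀ x ∈ I01, δ ≤ derivWithin (g i) I01 x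
  deriv_le : ∀ i, ∀ x ∈ I01, derivWithin (g i) I01 x ≤ lam
  holder : ∀ i, HolderBoundOn01 ε H (derivWithin (g i) I01)

section Words

variable {d : ℕ} {g : Fin d → ℝ → ℝ}

lemma wordMap_append (u v : List (Fin d)) (x : ℝ) :
    wordMap g (u ++ v) x = wordMap g v (wordMap g u x) := by
  induction u generalizing x with
  | nil => rfl
  | cons i u ih => exact ih (g i x)

lemma mapsTo_wordMap (hg : ∀ i, MapsTo (g i) I01 I01) (w : List (Fin d)) :
    MapsTo (wordMap g w) I01 I01 := by
  induction w with
  | nil => exact mapsTo_id _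
  | cons i w ih => exact ih.comp (hg i)

lemma strictMonoOn_wordMap (hmaps : ∀ i, MapsTo (g i) I01 I01)
    (hmono : ∀ i, StrictMonoOn (g i) I01) (w : List (Fin d)) :
    StrictMonoOn (wordMap g w) I01 := by
  induction w with
  | nil => exact strictMonoOn_id
  | cons i w ih => exact ih.comp (hmono i) (hmaps i)

variable {ε δ lam H C : ℝ}

lemma BranchBounds.strictMonoOn (hb : BranchBounds ε g δ lam H) (hδ : 0 < δ) (i : Fin d) :
    StrictMonoOn (g i) I01 :=
  strictMonoOn_of_derivWithin_pos (hb.smooth i) fun x hx => hδ.trans_le (hb.deriv_ge i x hx)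

/-- Bounded distortion of all compositions of the branches: the distortions
`(H/δ) |g_v(J)|^ε` along the orbit of an interval `J` add up to a geometric series,
since each branch contracts lengths by at least the factor `lam`. -/
lemma BranchBounds.expClose_relLen_wordMap (hb : BranchBounds ε g δ lam H) (hε : 0 ≤ ε)
    (hδ : 0 < δ) (hlam : 0 ≤ lam) (hH : 0 ≤ H) (hC₀ : 0 ≤ C)
    (hC : C * lam ^ ε + H / δ ≤ C) (v : List (Fin d)) {α β A B : ℝ} (hA : A ∈ I01)
    (hB : B ∈ I01) (hAα : A ≤ α) (hαβ : α ≤ β) (hβB : β ≤ B) (hAB : A < B) :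
    ExpClose (C * (B - A) ^ ε) (relLen id α β A B) (relLen (wordMap g v) α β A B) := by
  induction v generalizing α β A B with
  | nil =>
    exact ExpClose.refl (mul_nonneg hC₀ (rpow_nonneg (sub_nonneg.2 hAB.le) ε))
      (div_nonneg (sub_nonneg.2 hαβ) (sub_nonneg.2 hAB.le))
  | cons i v ih =>
    have hα : α ∈ I01 := ⟨hA.1.trans hAα, hαβ.trans (hβB.trans hB.2)⟩
    have hβ : β ∈ I01 := ⟨hα.1.trans hαβ, hβB.trans hB.2⟩
    have hmono := (hb.strictMonoOn hδ i).monotoneOn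
    have hstep := expClose_relLen_of_holder hε (hb.smooth i) hδ (hb.deriv_ge i) (hb.holder i)
      hH hA hB hAα hαβ hβB hAB
    have hrest := ih (hb.maps i hA) (hb.maps i hB) (hmono hA hα hAα) (hmono hα hβ hαβ)
      (hmono hβ hB hβB) (hb.strictMonoOn hδ i hA hB hAB)
    have hcontract : (g i B - g i A) ^ ε ≤ lam ^ ε * (B - A) ^ ε := by
      rw [← mul_rpow hlam (sub_nonneg.2 hAB.le)]
      exact rpow_le_rpow (sub_nonneg.2 (hmono hA hB hAB.le))
        (sub_le_mul_sub_of_derivWithin_le (hb.smooth i) (hb.deriv_le i) hA hB hAB.le) hε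
    refine (hstep.trans hrest).mono ?_ (div_nonneg (sub_nonneg.2 hαβ) (sub_nonneg.2 hAB.le))
    nlinarith [mul_le_mul_of_nonneg_left hcontract hC₀, rpow_nonneg (sub_nonneg.2 hAB.le) ε]

end Words

section Scaling

variable {d : ℕ} {ε δ lam H C : ℝ} {g : Fin d → ℝ → ℝ}

/-- Left endpoint of the `m`-th piece of the level-one partition of `[0,1]`, the pieces being
the children `g_m([0,1])` for `m < d` and the gaps between consecutive children after them. -/
def scalingLeft (g : Fin d → ℝ → ℝ) (m : Fin (2 * d - 1)) : ℝ :=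
  if h : (m : ℕ) < d then g ⟨m, h⟩ 0 else g ⟨(m : ℕ) - d, by omega⟩ 1

def scalingRight (g : Fin d → ℝ → ℝ) (m : Fin (2 * d - 1)) : ℝ :=
  if h : (m : ℕ) < d then g ⟨m, h⟩ 1 else g ⟨(m : ℕ) - d + 1, by omega⟩ 0

lemma scalingData_eq_relLen (w : List (Fin d)) (m : Fin (2 * d - 1)) :
    scalingData g w m = relLen (wordMap g w) (scalingLeft g m) (scalingRight g m) 0 1 := by
  unfold scalingData scalingLeft scalingRight relLen wordLen
  split_ifs <;> rfl

namespace IsCantorSystem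

lemma strictMonoOn (hg : IsCantorSystem 1 ε g) (i : Fin d) : StrictMonoOn (g i) I01 :=
  strictMonoOn_of_derivWithin_pos (hg.smooth i) (hg.deriv_pos i)

lemma exists_branchBounds (hg : IsCantorSystem 1 ε g) :
    ∃ δ lam H, 0 < δ ∧ 0 ≤ lam ∧ lam < 1 ∧ 0 < H ∧ BranchBounds ε g δ lam H := by
  have hcont : ∀ i, ContinuousOn (derivWithin (g i) I01) I01 := fun i =>
    (hg.smooth i).continuousOn_derivWithin (uniqueDiffOn_Icc zero_lt_one) le_rfl
  have hne : I01.Nonempty := nonempty_Icc.2 zero_le_one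
  have hδ : ∀ᶠ δ in 𝓝[>] (0 : ℝ), 0 < δ ∧ ∀ i, ∀ x ∈ I01, δ ≤ derivWithin (g i) I01 x := by
    refine (eventually_mem_nhdsWithin (a := 0)).and (eventually_all.2 fun i => ?_)
    obtain ⟨x₀, hx₀, hmin⟩ := isCompact_Icc.exists_isMinOn hne (hcont i)
    filter_upwards [Ioc_mem_nhdsGT (hg.deriv_pos i x₀ hx₀)] with δ hδ x hx
      using hδ.2.trans (hmin hx)
  have hlam : ∀ᶠ lam in 𝓝[<] (1 : ℝ),
      lam ∈ Ico 0 1 ∧ ∀ i, ∀ x ∈ I01, derivWithin (g i) I01 x ≤ lam := by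
    refine Filter.Eventually.and (Ico_mem_nhdsLT zero_lt_one)
      (eventually_all.2 fun i => ?_)
    obtain ⟨x₀, hx₀, hmax⟩ := isCompact_Icc.exists_isMaxOn hne (hcont i)
    filter_upwards [Ico_mem_nhdsLT (hg.deriv_lt_one i x₀ hx₀)] with lam hlam x hx
      using (hmax hx).trans hlam.1
  have hH : ∀ᶠ H in atTop, 0 < H ∧ ∀ i, HolderBoundOn01 ε H (derivWithin (g i) I01) := by
    refine (eventually_gt_atTop 0).and (eventually_all.2 fun i => ?_)
    obtain ⟨Hi, -, hHi⟩ := hg.holder i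
    filter_upwards [eventually_ge_atTop Hi] with H hH x hx y hy
    rw [iteratedDerivWithin_one] at hHi
    exact (hHi x hx y hy).trans (mul_le_mul_of_nonneg_right hH (rpow_nonneg (abs_nonneg _) ε))
  obtain ⟨δ, hδ₀, hδ⟩ := hδ.exists
  obtain ⟨lam, ⟨hlam₀, hlam₁⟩, hlam⟩ := hlam.exists
  obtain ⟨H, hH₀, hH⟩ := hH.exists
  exact ⟨δ, lam, H, hδ₀, hlam₀, hlam₁, hH₀, hg.maps, hg.smooth, hδ, hlam, hH⟩

lemma scalingLeft_mem (hg : IsCantorSystem 1 ε g) (m : Fin (2 * d - 1)) :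
    scalingLeft g m ∈ I01 := by
  unfold scalingLeft
  split_ifs
  exacts [hg.maps _ (left_mem_Icc.2 zero_le_one), hg.maps _ (right_mem_Icc.2 zero_le_one)]

lemma scalingRight_mem (hg : IsCantorSystem 1 ε g) (m : Fin (2 * d - 1)) :
    scalingRight g m ∈ I01 := by
  unfold scalingRight
  split_ifs
  exacts [hg.maps _ (right_mem_Icc.2 zero_le_one), hg.maps _ (left_mem_Icc.2 zero_le_one)]

lemma scalingLeft_le_scalingRight (hg : IsCantorSystem 1 ε g) (m : Fin (2 * d - 1)) :
    scalingLeft g m ≤ scalingRight g m := by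
  unfold scalingLeft scalingRight
  split_ifs
  · exact (hg.strictMonoOn _ (left_mem_Icc.2 zero_le_one) (right_mem_Icc.2 zero_le_one)
      zero_lt_one).le
  · exact (hg.ordered _ _ (Fin.mk_lt_mk.2 (Nat.lt_succ_self _))).le

lemma abs_scalingData_append_sub_le (hg : IsCantorSystem 1 ε g)
    (hb : BranchBounds ε g δ lam H) (hε : 0 < ε) (hδ : 0 < δ) (hlam : 0 ≤ lam) (hH : 0 ≤ H)
    (hC₀ : 0 ≤ C) (hC : C * lam ^ ε + H / δ ≤ C) (u v : List (Fin d)) (m : Fin (2 * d - 1)) :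
    |scalingData g (u ++ v) m - scalingData g u m| ≤ C * exp C * wordLen g u ^ ε := by
  have hG := strictMonoOn_wordMap hb.maps hg.strictMonoOn u
  have hGmaps := mapsTo_wordMap hb.maps u
  have h0 : (0 : ℝ) ∈ I01 := left_mem_Icc.2 zero_le_one
  have h1 : (1 : ℝ) ∈ I01 := right_mem_Icc.2 zero_le_one
  have ha := hg.scalingLeft_mem m
  have hb' := hg.scalingRight_mem m
  have hab := hg.scalingLeft_le_scalingRight m
  set G := wordMap g u
  have hlen : wordLen g u = G 1 - G 0 := rfl
  have hlen₀ : 0 < G 1 - G 0 := sub_pos.2 (hG h0 h1 zero_lt_one)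
  have hlen₁ : G 1 - G 0 ≤ 1 := by linarith [(hGmaps h0).1, (hGmaps h1).2]
  have hclose := hb.expClose_relLen_wordMap hε.le hδ hlam hH hC₀ hC v (hGmaps h0)
    (hGmaps h1) (hG.monotoneOn h0 ha ha.1) (hG.monotoneOn ha hb' hab)
    (hG.monotoneOn hb' h1 hb'.2) (hG h0 h1 zero_lt_one)
  have hr₀ : 0 ≤ relLen G (scalingLeft g m) (scalingRight g m) 0 1 :=
    div_nonneg (sub_nonneg.2 (hG.monotoneOn ha hb' hab)) hlen₀.le
  have hr₁ : relLen G (scalingLeft g m) (scalingRight g m) 0 1 ≤ 1 :=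
    div_le_one_of_le₀ (by linarith [hG.monotoneOn h0 ha ha.1, hG.monotoneOn hb' h1 hb'.2])
      hlen₀.le
  have hpow₀ : 0 ≤ (G 1 - G 0) ^ ε := rpow_nonneg hlen₀.le ε
  have hpow₁ : (G 1 - G 0) ^ ε ≤ 1 := rpow_le_one hlen₀.le hlen₁ hε.le
  have hsplit : relLen (wordMap g (u ++ v)) (scalingLeft g m) (scalingRight g m) 0 1
      = relLen (wordMap g v) (G (scalingLeft g m)) (G (scalingRight g m)) (G 0) (G 1) := by
    simp only [relLen, wordMap_append, G]
  rw [scalingData_eq_relLen, scalingData_eq_relLen, hsplit, hlen]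
  calc _ ≤ C * (G 1 - G 0) ^ ε * exp (C * (G 1 - G 0) ^ ε) :=
        hclose.abs_sub_le (mul_nonneg hC₀ hpow₀) hr₀ hr₁
    _ ≤ C * (G 1 - G 0) ^ ε * exp C := by gcongr; exact mul_le_of_le_one_right hC₀ hpow₁
    _ = C * exp C * (G 1 - G 0) ^ ε := by ring

lemma exists_abs_scalingData_append_sub_le (hg : IsCantorSystem 1 ε g) (hε : 0 < ε) :
    ∃ K > 0, ∀ u v m,
      |scalingData g (u ++ v) m - scalingData g u m| ≤ K * wordLen g u ^ ε := by
  obtain ⟨δ, lam, H, hδ, hlam₀, hlam₁, hH, hb⟩ := hg.exists_branchBounds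
  have hlamε : 0 < 1 - lam ^ ε := sub_pos.2 (rpow_lt_one hlam₀ hlam₁ hε)
  set C := H / δ / (1 - lam ^ ε)
  have hC : 0 < C := by positivity
  have hCrec : C * lam ^ ε + H / δ ≤ C := by
    have : C * (1 - lam ^ ε) = H / δ := div_mul_cancel₀ _ hlamε.ne'
    linarith
  exact ⟨C * exp C, by positivity,
    hg.abs_scalingData_append_sub_le hb hε hδ hlam₀ hH.le hC.le hCrec⟩

end IsCantorSystem

end Scaling

lemma dword_add {d : ℕ} (j : ℕ → Fin d) (p k : ℕ) :
    dword j (p + k) = dword j p ++ List.ofFn (fun i : Fin k => j (p + i)) := by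
  simp only [dword, List.ofFn_add]
  rfl

lemma dword_congr {d : ℕ} {j j' : ℕ → Fin d} {p : ℕ} (h : ∀ t < p, j t = j' t) :
    dword j p = dword j' p :=
  congrArg List.ofFn (funext fun i => h i i.isLt)

theorem stmt8_general (d : ℕ) (ε : ℝ) (hε : ε ∈ Set.Ioc (0:ℝ) 1)
    (g : Fin d → ℝ → ℝ) (hg : IsCantorSystem 1 ε g) :
    ∃ K > 0, ∀ j j' : ℕ → Fin d, ∀ p : ℕ,
      (∀ t < p, j t = j' t) → j p ≠ j' p →
      ∀ n, p ≤ n → ∀ m,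
        |scalingData g (dword j n) m - scalingData g (dword j' n) m|
          ≤ K * wordLen g (dword j p) ^ ε := by
  obtain ⟨K, hK, hKle⟩ := hg.exists_abs_scalingData_append_sub_le hε.1
  refine ⟨2 * K, by positivity, fun j j' p hjj' _ n hpn m => ?_⟩
  obtain ⟨k, rfl⟩ := Nat.exists_eq_add_of_le hpn
  have hj := hKle (dword j p) (List.ofFn fun i : Fin k => j (p + i)) m
  have hj' := hKle (dword j p) (List.ofFn fun i : Fin k => j' (p + i)) m
  rw [← dword_add] at hj
  rw [dword_congr hjj', ← dword_add, ← dword_congr hjj'] at hj'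
  calc _ ≤ |scalingData g (dword j (p + k)) m - scalingData g (dword j p) m|
        + |scalingData g (dword j p) m - scalingData g (dword j' (p + k)) m| := abs_sub_le _ _ _
    _ ≤ 2 * K * wordLen g (dword j p) ^ ε := by rw [abs_sub_comm] at hj'; linarith

/-- for a `C^{1+ε}` Cantor system there is `K > 0` such that for all
`j ≠ j'` (with `p = #(j∩j')`) and all `n ≥ p`,
`|S_n(j|_n) - S_n(j'|_n)|_∞ ≤ K |I_{j∩j'}|^ε`. -/
theorem stmt8 (d : ℕ) (hd : 2 ≤ d) (ε : ℝ) (hε : ε ∈ Set.Ioc (0:ℝ) 1)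
    (g : Fin d → ℝ → ℝ) (hg : IsCantorSystem 1 ε g) :
    ∃ K > 0, ∀ j j' : ℕ → Fin d, ∀ p : ℕ,
      (∀ t < p, j t = j' t) → j p ≠ j' p →
      ∀ n, p ≤ n → ∀ m,
        |scalingData g (dword j n) m - scalingData g (dword j' n) m|
          ≤ K * wordLen g (dword j p) ^ ε :=
  stmt8_general d ε hε g hg
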